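/- In the weight lattice of the root system A_n (n ≥ 3): if ω is a dominant weight with ω ≻ ω_1 + ω_n (strict dominance order), then ω ⪰ ω_2 + ω_{n−1}. -/
import Mathlib
set_option maxHeartbeats 800000

/-- The simple root `α_{i+1}` of the root system `A_n` expressed in the basis of
fundamental weights: `α_i = 2ω_i - ω_{i-1} - ω_{i+1}` (indices `0,…,n-1`). -/
def simpleRootA (n : ℕ) (i : Fin n) : Fin n → ℤ :=
  fun j => if j = i then 2
    else if ((j : ℕ) + 1 = (i : ℕ)) ∨ ((i : ℕ) + 1 = (j : ℕ)) then -1 else 0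

/-- `v` lies in the nonnegative integer span of the simple roots of `A_n`. -/
def nnSpanA (n : ℕ) (v : Fin n → ℤ) : Prop :=
  ∃ c : Fin n → ℕ, v = ∑ i, (c i : ℤ) • simpleRootA n i

lemma sum_smul_simpleRootA_apply (n : ℕ) (g : Fin n → ℤ) (j : Fin n) :
    (∑ i, g i • simpleRootA n i) j
      = 2 * g j
        - (if h : (j : ℕ) + 1 < n then g ⟨(j : ℕ) + 1, h⟩ else 0)
        - (if h : 0 < (j : ℕ) then
            g ⟨(j : ℕ) - 1, Nat.lt_of_le_of_lt (Nat.sub_le _ _) j.isLt⟩ else 0) := by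
  have key : ∀ i : Fin n, (g i • simpleRootA n i) j
      = (if i = j then 2 * g i else 0)
        + (if (i : ℕ) = (j : ℕ) + 1 then -g i else 0)
        + (if (i : ℕ) + 1 = (j : ℕ) then -g i else 0) := by
    intro i
    simp only [Pi.smul_apply, smul_eq_mul, simpleRootA, Fin.ext_iff]
    split_ifs <;> omega
  rw [Finset.sum_apply]
  simp only [key]
  rw [Finset.sum_add_distrib, Finset.sum_add_distrib]
  congr 1
  · congr 1
    · rw [Finset.sum_ite_eq' Finset.univ j (fun i => 2 * g i)]
      simp
    · by_cases h : (j : ℕ) + 1 < n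
      · rw [dif_pos h]
        have : ∀ i : Fin n, ((i : ℕ) = (j : ℕ) + 1) = (i = (⟨(j : ℕ) + 1, h⟩ : Fin n)) := by
          intro i; simp [Fin.ext_iff]
        simp only [this]
        rw [Finset.sum_ite_eq' Finset.univ (⟨(j : ℕ) + 1, h⟩ : Fin n) (fun i => -g i)]
        simp
      · rw [dif_neg h]
        apply Finset.sum_eq_zero
        intro i _
        rw [if_neg]
        have := i.isLt
        omega
  · by_cases h : 0 < (j : ℕ)
    · rw [dif_pos h]
      have : ∀ i : Fin n, ((i : ℕ) + 1 = (j : ℕ))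
          = (i = (⟨(j : ℕ) - 1, Nat.lt_of_le_of_lt (Nat.sub_le _ _) j.isLt⟩ : Fin n)) := by
        intro i; simp [Fin.ext_iff]; omega
      simp only [this]
      rw [Finset.sum_ite_eq' Finset.univ _ (fun i => -g i)]
      simp
    · rw [dif_neg h]
      apply Finset.sum_eq_zero
      intro i _
      rw [if_neg]
      omega

/-- In type `A_n`, `n ≥ 3`: if `ω` is dominant and `ω ≻ ω_1 + ω_n`, then
`ω ⪰ ω_2 + ω_{n-1}` (fundamental-weight coordinates, 0-indexed). -/
theorem stmt4 (n : ℕ) (hn : 3 ≤ n)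
    (ω : Fin n → ℤ) (hdom : ∀ i, 0 ≤ ω i)
    (hsub : nnSpanA n (ω - (Pi.single ⟨0, by omega⟩ (1 : ℤ)
      + Pi.single ⟨n - 1, by omega⟩ (1 : ℤ))))
    (hne : ω ≠ Pi.single ⟨0, by omega⟩ (1 : ℤ) + Pi.single ⟨n - 1, by omega⟩ (1 : ℤ)) :
    nnSpanA n (ω - (Pi.single ⟨1, by omega⟩ (1 : ℤ)
      + Pi.single ⟨n - 2, by omega⟩ (1 : ℤ))) := by
  obtain ⟨c, hc⟩ := hsub
  -- coordinatewise form of hc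
  have E : ∀ j : Fin n, ω j
      - ((if (j : ℕ) = 0 then (1:ℤ) else 0) + (if (j : ℕ) = n - 1 then (1:ℤ) else 0))
      = 2 * (c j : ℤ)
        - (if h : (j : ℕ) + 1 < n then ((c ⟨(j : ℕ) + 1, h⟩ : ℤ)) else 0)
        - (if h : 0 < (j : ℕ) then
            ((c ⟨(j : ℕ) - 1, Nat.lt_of_le_of_lt (Nat.sub_le _ _) j.isLt⟩ : ℤ)) else 0) := by
    intro j
    have := congrFun hc j
    rw [sum_smul_simpleRootA_apply] at this
    simpa [Pi.single_apply, Fin.ext_iff] using this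
  -- natural-number version of c on ℕ indices
  set c' : ℕ → ℕ := fun k => if h : k < n then c ⟨k, h⟩ else 0 with hc'
  have hcv : ∀ (k : ℕ) (h : k < n), c' k = c ⟨k, h⟩ := by
    intro k h; simp [hc', h]
  -- interior concavity
  have hconc : ∀ k : ℕ, 1 ≤ k → k ≤ n - 2 → c' (k - 1) + c' (k + 1) ≤ 2 * c' k := by
    intro k h1 h2
    have hk : k < n := by omega
    have hE := E ⟨k, hk⟩
    simp only [Fin.val_mk] at hE
    have hd := hdom ⟨k, hk⟩
    rw [if_neg (by omega), if_neg (by omega)] at hE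
    rw [dif_pos (show k + 1 < n by omega), dif_pos (show 0 < k by omega)] at hE
    rw [hcv k hk, hcv (k - 1) (by omega), hcv (k + 1) (by omega)]
    omega
  -- c is not identically zero
  -- c is not identically zero
  have hnz : ∃ k : ℕ, k < n ∧ c' k ≠ 0 := by
    by_contra h
    push_neg at h
    apply hne
    have hcz : ∀ i : Fin n, c i = 0 := by
      intro i
      have := h (i : ℕ) i.isLt
      rwa [hcv _ i.isLt, Fin.eta] at this
    have := hc
    simp only [hcz, Nat.cast_zero, zero_smul, Finset.sum_const_zero] at this
    exact sub_eq_zero.mp this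
  -- every interior coefficient is positive
  have hpos : ∀ k : ℕ, 1 ≤ k → k ≤ n - 2 → 1 ≤ c' k := by
    by_contra h
    push_neg at h
    obtain ⟨j, hj1, hj2, hj0'⟩ := h
    have hj0 : c' j = 0 := by omega
    have R : ∀ m : ℕ, ((j + m ≤ n - 1) → c' (j + m) = 0)
        ∧ ((j + m + 1 ≤ n - 1) → c' (j + m + 1) = 0) := by
      intro m
      induction m with
      | zero =>
        refine ⟨fun _ => hj0, fun h' => ?_⟩
        have := hconc j hj1 hj2
        rw [show j + 0 + 1 = j + 1 from by omega]
        omega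
      | succ m ih =>
        constructor
        · intro h'
          have := ih.2 (by omega)
          rw [show j + (m + 1) = j + m + 1 from by omega]
          exact this
        · intro h'
          have h1 := ih.1 (by omega)
          have h2 := ih.2 (by omega)
          have h3 := hconc (j + m + 1) (by omega) (by omega)
          rw [show j + m + 1 - 1 = j + m from by omega] at h3
          rw [show j + (m + 1) + 1 = j + m + 1 + 1 from by omega]
          omega
    have L : ∀ m : ℕ, ((m ≤ j) → c' (j - m) = 0)
        ∧ ((m + 1 ≤ j) → c' (j - m - 1) = 0) := by
      intro m
      induction m with
      | zero =>
        refine ⟨fun _ => hj0, fun h' => ?_⟩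
        have := hconc j hj1 hj2
        have e : j - 0 - 1 = j - 1 := by omega
        rw [e]
        omega
      | succ m ih =>
        constructor
        · intro h'
          have := ih.2 (by omega)
          rw [show j - (m + 1) = j - m - 1 from by omega]
          exact this
        · intro h'
          have h1 := ih.1 (by omega)
          have h2 := ih.2 (by omega)
          have h3 := hconc (j - m - 1) (by omega) (by omega)
          rw [show j - m - 1 - 1 = j - (m + 1) - 1 from by omega,
            show j - m - 1 + 1 = j - m from by omega] at h3
          omega
    obtain ⟨k, hk, hknz⟩ := hnz
    apply hknz
    rcases le_or_gt j k with h' | h'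
    · have := (R (k - j)).1 (by omega)
      rwa [show j + (k - j) = k from by omega] at this
    · have := (L (j - k)).1 (by omega)
      rwa [show j - (j - k) = k from by omega] at this
  have hposF : ∀ i : Fin n, 1 ≤ (i : ℕ) → (i : ℕ) ≤ n - 2 → 1 ≤ c i := by
    intro i h1 h2
    have := hpos (i : ℕ) h1 h2
    rwa [hcv _ i.isLt, Fin.eta] at this
  set d : Fin n → ℕ := fun i => if 1 ≤ (i : ℕ) ∧ (i : ℕ) ≤ n - 2 then c i - 1 else c i
    with hd
  have hdZ : ∀ i : Fin n, ((d i : ℤ))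
      = (c i : ℤ) - (if 1 ≤ (i : ℕ) ∧ (i : ℕ) ≤ n - 2 then 1 else 0) := by
    intro i
    simp only [hd]
    split_ifs with h
    · rw [Nat.cast_sub (hposF i h.1 h.2)]
      norm_num
    · ring
  refine ⟨d, ?_⟩
  funext j
  rw [Pi.sub_apply, sum_smul_simpleRootA_apply]
  have hEj := E j
  simp only [Pi.add_apply, Pi.single_apply, Fin.ext_iff, Fin.val_mk] at *
  simp only [hdZ, Fin.val_mk]
  split_ifs at hEj ⊢ <;> omega
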